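/- Unwanted generalization bound: Fix z* ∈ {0,1}^d and define J(z) = m if z = z* and J(z) = M₀ − d_H(z,z*)·ΔM/d otherwise, with ΔM > 0 and m < M₀ − ΔM. Let p_θ be factorized Bernoulli with all θ_i ∈ (0,1). Then for any coordinate i with ∏_{j≠i} p_{θ_j}(z_j*) ≠ 0, the i-th coordinate of −∇_θ E_{z~p_θ}[J(z)] has the same sign (nonnegative product) as the i-th coordinate of ∇_θ p_θ(z*) if and only if m ≤ M₀ − ΔM / (d · ∏_{j≠i} p_{θ_j}(z_j*)). -/

import Mathlib

/-!
Under the product Bernoulli law, linearity gives `E[d_H(z, z*)] = ∑ₖ (1 - p_{θ_k}(z*_k))`, so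
`E[J] = M₀ - (ΔM/d) ∑ₖ (1 - p_{θ_k}(z*_k)) + (m - M₀) p_θ(z*)`, which is affine in each `θ_i`.
With `s = ±1` the slope of `p_{θ_i}(z*_i)` and `Q = ∏_{j≠i} p_{θ_j}(z*_j)`, the two partial
derivatives are `s (ΔM/d + (m - M₀) Q)` and `s Q`, so the sign condition reads
`Q (ΔM/d + (m - M₀) Q) ≤ 0`, i.e. `m ≤ M₀ - ΔM / (d Q)` after dividing by `Q² > 0`.
-/

open Finset Function

def bernoulliWeight (t : ℝ) (b : Bool) : ℝ := if b then t else 1 - t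

def productWeight {ι : Type*} [Fintype ι] (θ : ι → ℝ) (z : ι → Bool) : ℝ :=
  ∏ j, bernoulliWeight (θ j) (z j)

theorem hasDerivAt_bernoulliWeight (b : Bool) (x : ℝ) :
    HasDerivAt (bernoulliWeight · b) (if b then 1 else -1) x := by
  cases b
  · simpa [bernoulliWeight] using (hasDerivAt_id' x).const_sub 1
  · simpa [bernoulliWeight] using hasDerivAt_id' x

section Update

variable {ι M : Type*} [Fintype ι] [DecidableEq ι]

@[to_additive]
theorem prod_apply_update [CommMonoid M] (F : ι → ℝ → M) (θ : ι → ℝ) (i : ι) (t : ℝ) :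
    ∏ k, F k (update θ i t k) = F i t * ∏ k ∈ univ.erase i, F k (θ k) := by
  rw [← mul_prod_erase _ _ (mem_univ i), update_self]
  congr 1
  exact prod_congr rfl fun k hk => by rw [update_of_ne (ne_of_mem_erase hk)]

theorem hasDerivAt_sum_apply_update (F : ι → ℝ → ℝ) (θ : ι → ℝ) (i : ι) {F' x : ℝ}
    (hF : HasDerivAt (F i) F' x) :
    HasDerivAt (fun t => ∑ k, F k (update θ i t k)) F' x := by
  simp only [sum_apply_update]
  exact hF.add_const _

theorem hasDerivAt_productWeight_update (θ : ι → ℝ) (i : ι) (z : ι → Bool) (x : ℝ) :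
    HasDerivAt (fun t => productWeight (update θ i t) z)
      ((if z i then 1 else -1) * ∏ j ∈ univ.erase i, bernoulliWeight (θ j) (z j)) x := by
  simp only [productWeight, prod_apply_update fun j t => bernoulliWeight t (z j)]
  exact (hasDerivAt_bernoulliWeight (z i) x).mul_const _

end Update

section Expectation

variable {ι : Type*} [Fintype ι] [DecidableEq ι]

theorem sum_productWeight (θ : ι → ℝ) : ∑ z, productWeight θ z = 1 := by
  unfold productWeight
  rw [← Fintype.prod_sum]
  simp [bernoulliWeight]

theorem sum_productWeight_mul_apply (θ : ι → ℝ) (k : ι) (f : Bool → ℝ) :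
    ∑ z, productWeight θ z * f (z k) = ∑ b, bernoulliWeight (θ k) b * f b := by
  set g : ι → Bool → ℝ := fun j b => bernoulliWeight (θ j) b * if j = k then f b else 1
  have hg : ∀ z : ι → Bool, productWeight θ z * f (z k) = ∏ j, g j (z j) := by
    intro z
    simp only [g, productWeight, prod_mul_distrib, prod_ite_eq', mem_univ, if_true]
  simp only [hg, ← Fintype.prod_sum]
  rw [prod_eq_single_of_mem k (mem_univ k) fun j _ hj => by simp [g, hj, bernoulliWeight]]
  simp [g]

theorem sum_productWeight_mul_hammingDist (θ : ι → ℝ) (a : ι → Bool) :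
    ∑ z, productWeight θ z * (hammingDist z a : ℝ) = ∑ k, (1 - bernoulliWeight (θ k) (a k)) := by
  have hdist : ∀ z : ι → Bool, (hammingDist z a : ℝ) = ∑ k, if z k ≠ a k then 1 else 0 := by
    intro z
    simp [hammingDist, card_filter]
  simp only [hdist, mul_sum]
  rw [sum_comm]
  refine sum_congr rfl fun k _ => ?_
  rw [sum_productWeight_mul_apply θ k fun b => if b ≠ a k then 1 else 0]
  cases a k <;> simp [bernoulliWeight]

theorem sum_mul_ite_eq {α : Type*} [Fintype α] [DecidableEq α] (w g : α → ℝ) (a : α) (m : ℝ) :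
    ∑ z, w z * (if z = a then m else g z) = ∑ z, w z * g z + w a * (m - g a) := by
  have h : ∀ z, w z * (if z = a then m else g z)
      = w z * g z + if z = a then w a * (m - g a) else 0 := by
    intro z
    split_ifs with hz
    · subst hz; ring
    · ring
  simp [h, sum_add_distrib]

def spikedHamming (a : ι → Bool) (m M0 c : ℝ) (z : ι → Bool) : ℝ :=
  if z = a then m else M0 - hammingDist z a * c

theorem sum_productWeight_mul_spikedHamming (θ : ι → ℝ) (a : ι → Bool) (m M0 c : ℝ) :
    ∑ z, productWeight θ z * spikedHamming a m M0 c z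
      = M0 - c * ∑ k, (1 - bernoulliWeight (θ k) (a k)) + (m - M0) * productWeight θ a := by
  have hlin : ∀ z, productWeight θ z * (M0 - hammingDist z a * c)
      = M0 * productWeight θ z - c * (productWeight θ z * hammingDist z a) := fun z => by ring
  simp only [spikedHamming]
  rw [sum_mul_ite_eq, hammingDist_self]
  simp only [hlin, sum_sub_distrib, ← mul_sum, sum_productWeight, sum_productWeight_mul_hammingDist]
  push_cast
  ring

theorem hasDerivAt_sum_productWeight_update_mul_spikedHamming (θ : ι → ℝ) (a : ι → Bool)
    (i : ι) (m M0 c x : ℝ) :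
    HasDerivAt
      (fun t => ∑ z, productWeight (update θ i t) z * spikedHamming a m M0 c z)
      ((if a i then 1 else -1) * (c + (m - M0) * ∏ j ∈ univ.erase i, bernoulliWeight (θ j) (a j)))
      x := by
  simp only [sum_productWeight_mul_spikedHamming]
  have hdist := hasDerivAt_sum_apply_update (fun k t => 1 - bernoulliWeight t (a k)) θ i
    ((hasDerivAt_bernoulliWeight (a i) x).const_sub 1)
  refine (((hdist.const_mul c).const_sub M0).fun_add
    ((hasDerivAt_productWeight_update θ i a x).const_mul (m - M0))).congr_deriv ?_
  ring

end Expectation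

theorem neg_mul_mul_nonneg_iff_le_sub_div {s Q c m M0 : ℝ} (hs : s ≠ 0) (hQ : Q ≠ 0) :
    -(s * (c + (m - M0) * Q)) * (s * Q) ≥ 0 ↔ m ≤ M0 - c / Q := by
  have hsq : 0 < (s * Q) ^ 2 := by positivity
  have h : -(s * (c + (m - M0) * Q)) * (s * Q) = (s * Q) ^ 2 * (M0 - c / Q - m) := by
    field_simp
    ring
  rw [h, ge_iff_le, mul_nonneg_iff_of_pos_left hsq, sub_nonneg]

theorem unwanted_generalization_general (d : ℕ) (zstar : Fin d → Bool)
    (m M0 ΔM : ℝ) (θ : Fin d → ℝ) (i : Fin d)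
    (hprod : (∏ j ∈ Finset.univ.erase i, (if zstar j then θ j else 1 - θ j)) ≠ 0) :
    let dH : (Fin d → Bool) → (Fin d → Bool) → ℕ :=
      fun z z' => (Finset.univ.filter fun j => z j ≠ z' j).card
    let J : (Fin d → Bool) → ℝ :=
      fun z => if z = zstar then m else M0 - (dH z zstar : ℝ) * ΔM / d
    let P : (Fin d → ℝ) → (Fin d → Bool) → ℝ := fun t z => ∏ j, if z j then t j else 1 - t j
    (-(deriv (fun t => ∑ z : Fin d → Bool, P (Function.update θ i t) z * J z) (θ i)))
        * deriv (fun t => P (Function.update θ i t) zstar) (θ i) ≥ 0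
      ↔ m ≤ M0 - ΔM / (d * ∏ j ∈ Finset.univ.erase i, (if zstar j then θ j else 1 - θ j)) := by
  intro dH J P
  have hJ : J = spikedHamming zstar m M0 (ΔM / d) := by
    funext z
    simp only [J, dH, spikedHamming, hammingDist, mul_div_assoc]
  have hE := hasDerivAt_sum_productWeight_update_mul_spikedHamming θ zstar i m M0 (ΔM / d) (θ i)
  have hP := hasDerivAt_productWeight_update θ i zstar (θ i)
  rw [hJ]
  simp only [productWeight, bernoulliWeight] at hE hP
  rw [hE.deriv, hP.deriv, div_mul_eq_div_div]
  exact neg_mul_mul_nonneg_iff_le_sub_div (by split_ifs <;> norm_num) hprod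

/-- Unwanted generalization bound: for `J(z*) = m` and `J(z) = M₀ − d_H(z,z*)·ΔM/d`
otherwise, with `ΔM > 0`, `m < M₀ − ΔM` and factorized Bernoulli `p_θ`, the `i`-th
coordinate of `−∇_θ E[J]` aligns (nonnegative product) with the `i`-th coordinate of
`∇_θ p_θ(z*)` iff `m ≤ M₀ − ΔM / (d · ∏_{j≠i} p_{θ_j}(z*_j))`. -/
theorem unwanted_generalization (d : ℕ) (hd : 0 < d) (zstar : Fin d → Bool)
    (m M0 ΔM : ℝ) (hΔM : 0 < ΔM) (hm : m < M0 - ΔM)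
    (θ : Fin d → ℝ) (hθ : ∀ j, θ j ∈ Set.Ioo (0 : ℝ) 1) (i : Fin d)
    (hprod : (∏ j ∈ Finset.univ.erase i, (if zstar j then θ j else 1 - θ j)) ≠ 0) :
    let dH : (Fin d → Bool) → (Fin d → Bool) → ℕ :=
      fun z z' => (Finset.univ.filter fun j => z j ≠ z' j).card
    let J : (Fin d → Bool) → ℝ :=
      fun z => if z = zstar then m else M0 - (dH z zstar : ℝ) * ΔM / d
    let P : (Fin d → ℝ) → (Fin d → Bool) → ℝ := fun t z => ∏ j, if z j then t j else 1 - t j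
    (-(deriv (fun t => ∑ z : Fin d → Bool, P (Function.update θ i t) z * J z) (θ i)))
        * deriv (fun t => P (Function.update θ i t) zstar) (θ i) ≥ 0
      ↔ m ≤ M0 - ΔM / (d * ∏ j ∈ Finset.univ.erase i, (if zstar j then θ j else 1 - θ j)) :=
  unwanted_generalization_general d zstar m M0 ΔM θ i hprod
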